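/- For all positive integers n and k with 2k ≤ n, the strong chromatic index and the semistrong chromatic index of the Kneser graph K(n,k) are both equal to the binomial coefficient C(n, 2k). -/

import Mathlib

/-!
Colouring each edge `{S, T}` of `K(n,k)` by the `2k`-set `S ∪ T` is a strong edge-colouring with
`C(n,2k)` colours: two disjoint `k`-subsets of a fixed `2k`-set `U` are complements in `U`, so the
edges of colour `U` form an induced perfect matching on the `k`-subsets of `U`.

Conversely, orient each edge of a semistrong matching `M` as `(Aₑ, Bₑ)` with `Aₑ` of degree one
among the matched vertices. Listing the pairs `(Aₑ, Bₑ)` and then the pairs `(Bₑ, Aₑ)` gives a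
skew cross-intersecting family, so `2|M| ≤ C(2k,k)` by Bollobás's skew inequality. Since `K(n,k)`
has `C(n,k) C(n-k,k) / 2 = C(n,2k) C(2k,k) / 2` edges, even a semistrong colouring needs
`C(n,2k)` colours.

The skew inequality is proved by the polynomial method. Embed the ground set in `ℚ` and put
`Pᵢ = ∏_{x ∈ Aᵢ} (X - x)`; the forms `Fⱼ(c) = ∏_{y ∈ Bⱼ} ∑_{d ≤ a} c_d y^d` of degree `b` in
`a + 1` variables satisfy `Fⱼ(coeff Pᵢ) = ∏_{y ∈ Bⱼ} Pᵢ(y)`, which vanishes iff `Aᵢ` meets `Bⱼ`.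
This triangularity makes the `Fⱼ` linearly independent in a space of dimension `C(a+b, a)`.
-/

open SimpleGraph

variable {V : Type*}

/-- The set of endvertices of the edges in `M`. -/
def edgeVerts (M : Set (Sym2 V)) : Set V := {v | ∃ e ∈ M, v ∈ e}

/-- `M` is a matching of the simple graph `G`: a set of edges of `G`
that are pairwise disjoint. -/
def IsMatchingSet (G : SimpleGraph V) (M : Set (Sym2 V)) : Prop :=
  M ⊆ G.edgeSet ∧ ∀ e ∈ M, ∀ f ∈ M, e ≠ f → ∀ v : V, v ∈ e → v ∉ f

/-- `M` is a semistrong matching of `G`: a matching such that every edge of `M`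
has an endvertex of degree one in the subgraph of `G` induced by the
endvertices of the edges of `M`. -/
def IsSemistrongMatching (G : SimpleGraph V) (M : Set (Sym2 V)) : Prop :=
  IsMatchingSet G M ∧
    ∀ e ∈ M, ∃ u v : V, e = s(u, v) ∧ ∀ w ∈ edgeVerts M, G.Adj u w → w = v

/-- `G` has a semistrong edge-coloring with (at most) `k` colors: a proper
edge-coloring in which every color class is a semistrong matching. -/
def HasSemistrongEdgeColoring (G : SimpleGraph V) (k : ℕ) : Prop :=
  ∃ c : Sym2 V → ℕ, (∀ e ∈ G.edgeSet, c e < k) ∧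
    ∀ i : ℕ, IsSemistrongMatching G {e | e ∈ G.edgeSet ∧ c e = i}

/-- The semistrong chromatic index of `G`. -/
noncomputable def ssChromIdx (G : SimpleGraph V) : ℕ :=
  sInf {k | HasSemistrongEdgeColoring G k}

/-- `M` is a strong (induced) matching of `G`: a matching such that the subgraph
of `G` induced by the endvertices of `M` contains no edges other than those of `M`. -/
def IsStrongMatching (G : SimpleGraph V) (M : Set (Sym2 V)) : Prop :=
  IsMatchingSet G M ∧
    ∀ u ∈ edgeVerts M, ∀ w ∈ edgeVerts M, G.Adj u w → s(u, w) ∈ M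

/-- `G` has a strong edge-coloring with (at most) `k` colors. -/
def HasStrongEdgeColoring (G : SimpleGraph V) (k : ℕ) : Prop :=
  ∃ c : Sym2 V → ℕ, (∀ e ∈ G.edgeSet, c e < k) ∧
    ∀ i : ℕ, IsStrongMatching G {e | e ∈ G.edgeSet ∧ c e = i}

/-- The strong chromatic index of `G`. -/
noncomputable def strongChromIdx (G : SimpleGraph V) : ℕ :=
  sInf {k | HasStrongEdgeColoring G k}

/-- The Kneser graph `K(n,k)`: vertices are the `k`-element subsets of an
`n`-element set, with two vertices adjacent iff the corresponding subsets are
disjoint. -/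
def kneserGraph (n k : ℕ) : SimpleGraph {s : Finset (Fin n) // s.card = k} :=
  SimpleGraph.fromRel (fun s t => Disjoint s.1 t.1)

open Finset Module

theorem linearIndependent_of_triangular {ι K M : Type*} [LinearOrder ι] [Fintype ι] [Field K]
    [AddCommGroup M] [Module K M] (v : ι → M) (φ : ι → Dual K M)
    (hlt : ∀ i j, i < j → φ i (v j) = 0) (hdiag : ∀ i, φ i (v i) ≠ 0) :
    LinearIndependent K v := by
  rw [Fintype.linearIndependent_iff]
  intro g hg i
  induction i using WellFoundedLT.induction with
  | _ i ih =>
    have hφ : ∑ j, g j * φ i (v j) = 0 := by simpa using congrArg (φ i) hg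
    rw [Finset.sum_eq_single i (fun j _ hji => ?_) (by simp)] at hφ
    · exact (mul_eq_zero.1 hφ).resolve_right (hdiag i)
    · rcases hji.lt_or_gt with hj | hj
      · rw [ih j hj, zero_mul]
      · rw [hlt i j hj, mul_zero]

theorem MvPolynomial.finrank_homogeneousSubmodule {σ K : Type*} [Fintype σ] [Field K] (n : ℕ) :
    finrank K (homogeneousSubmodule σ K n) = (Fintype.card σ + n - 1).choose n := by
  classical
  have hS : {d : σ →₀ ℕ | d.degree = n} = ↑((univ : Finset σ).finsuppAntidiag n) := by
    ext d
    simp [mem_finsuppAntidiag, Finsupp.degree_eq_sum]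
  rw [homogeneousSubmodule_eq_finsupp_supported,
    (AddMonoidAlgebra.supportedEquivFinsupp _).finrank_eq, hS, finrank_finsupp_self]
  simp [card_finsuppAntidiag_nat_eq_choose]

theorem prod_prod_sub_eq_zero_iff {α K : Type*} [Field K] {t : α → K} (ht : Function.Injective t)
    (s u : Finset α) : ∏ y ∈ u, ∏ x ∈ s, (t y - t x) = 0 ↔ ¬ Disjoint s u := by
  simp only [prod_eq_zero_iff, sub_eq_zero, ht.eq_iff, not_disjoint_iff]
  exact ⟨fun ⟨y, hy, x, hx, hxy⟩ => ⟨x, hx, hxy ▸ hy⟩, fun ⟨x, hx, hy⟩ => ⟨x, hy, x, hx, rfl⟩⟩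

noncomputable def prodEvalForm {α K : Type*} [CommSemiring K] (a : ℕ) (t : α → K) (Y : Finset α) :
    MvPolynomial (Fin (a + 1)) K :=
  ∏ y ∈ Y, ∑ d : Fin (a + 1), MvPolynomial.C (t y ^ (d : ℕ)) * MvPolynomial.X d

theorem isHomogeneous_prodEvalForm {α K : Type*} [CommSemiring K] (a : ℕ) (t : α → K)
    (Y : Finset α) : (prodEvalForm a t Y).IsHomogeneous #Y := by
  rw [card_eq_sum_ones]
  exact .prod _ _ _ fun y _ => .sum _ _ _ fun d _ => MvPolynomial.isHomogeneous_C_mul_X _ d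

theorem eval_coeff_prodEvalForm {α K : Type*} [CommRing K] {a : ℕ} {P : Polynomial K}
    (hP : P.natDegree ≤ a) (t : α → K) (Y : Finset α) :
    MvPolynomial.eval (fun d : Fin (a + 1) => P.coeff d) (prodEvalForm a t Y) =
      ∏ y ∈ Y, P.eval (t y) := by
  simp only [prodEvalForm, map_prod, map_sum, map_mul, MvPolynomial.eval_C, MvPolynomial.eval_X]
  refine prod_congr rfl fun y _ => ?_
  rw [Polynomial.eval_eq_sum_range' (Nat.lt_succ_of_le hP), ← Fin.sum_univ_eq_sum_range]
  exact sum_congr rfl fun d _ => mul_comm _ _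

open Polynomial in
/-- Bollobás's skew set-pairs inequality (Frankl, Lovász). -/
theorem card_le_choose_of_skew_cross_intersecting {α ι : Type*} [Countable α] [LinearOrder ι]
    [Fintype ι] {a b : ℕ} (A B : ι → Finset α) (hA : ∀ i, #(A i) ≤ a) (hB : ∀ i, #(B i) = b)
    (hAB : ∀ i, Disjoint (A i) (B i)) (hlt : ∀ i j, i < j → ¬ Disjoint (A i) (B j)) :
    Fintype.card ι ≤ (a + b).choose a := by
  obtain ⟨t₀, ht₀⟩ := Countable.exists_injective_nat α
  set t : α → ℚ := fun x => t₀ x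
  have ht : Function.Injective t := Nat.cast_injective.comp ht₀
  set H := MvPolynomial.homogeneousSubmodule (Fin (a + 1)) ℚ b
  have : Module.Finite ℚ H := Module.Finite.iff_fg.2 (MvPolynomial.homogeneousSubmodule_fg _ _ _)
  let P : ι → ℚ[X] := fun i => ∏ x ∈ A i, (X - C (t x))
  have hP : ∀ i, (P i).natDegree ≤ a := fun i => by
    rw [natDegree_prod_of_monic _ _ fun x _ => monic_X_sub_C (t x)]
    simpa using hA i
  let F : ι → H := fun j => ⟨prodEvalForm a t (B j), by
    simpa [H, hB j] using isHomogeneous_prodEvalForm a t (B j)⟩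
  let φ : ι → Dual ℚ H := fun i =>
    (MvPolynomial.aeval fun d : Fin (a + 1) => (P i).coeff d).toLinearMap ∘ₗ H.subtype
  have hφF : ∀ i j, φ i (F j) = ∏ y ∈ B j, ∏ x ∈ A i, (t y - t x) := fun i j => by
    change MvPolynomial.aeval _ (prodEvalForm a t (B j)) = _
    rw [MvPolynomial.aeval_eq_eval, eval_coeff_prodEvalForm (hP i)]
    simp only [P, eval_prod, eval_sub, eval_X, eval_C]
  have hF : LinearIndependent ℚ F := linearIndependent_of_triangular F φ
    (fun i j hij => by rw [hφF, prod_prod_sub_eq_zero_iff ht]; exact hlt i j hij)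
    (fun i => by rw [hφF, ne_eq, prod_prod_sub_eq_zero_iff ht, not_not]; exact hAB i)
  calc Fintype.card ι ≤ finrank ℚ H := hF.fintype_card_le_finrank
    _ = (a + b).choose a := by
      rw [MvPolynomial.finrank_homogeneousSubmodule, Fintype.card_fin, Nat.choose_symm_add]
      congr 1
      omega

section EdgeColoring

variable {G : SimpleGraph V} {M : Set (Sym2 V)}

theorem IsStrongMatching.isSemistrongMatching (h : IsStrongMatching G M) :
    IsSemistrongMatching G M := by
  refine ⟨h.1, fun e he => ?_⟩
  induction e with
  | _ u v =>
    refine ⟨u, v, rfl, fun w hw huw => ?_⟩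
    have huwM : s(u, w) ∈ M := h.2 u ⟨s(u, v), he, Sym2.mem_mk_left _ _⟩ w hw huw
    by_cases heq : s(u, w) = s(u, v)
    · rcases Sym2.eq_iff.1 heq with ⟨-, rfl⟩ | ⟨rfl, rfl⟩
      · rfl
      · exact (G.irrefl huw).elim
    · exact (h.1.2 _ huwM _ he heq u (Sym2.mem_mk_left u w) (Sym2.mem_mk_left u v)).elim

theorem HasStrongEdgeColoring.hasSemistrongEdgeColoring {K : ℕ} (h : HasStrongEdgeColoring G K) :
    HasSemistrongEdgeColoring G K :=
  let ⟨c, hc, hcM⟩ := h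
  ⟨c, hc, fun i => (hcM i).isSemistrongMatching⟩

theorem ssChromIdx_le_strongChromIdx {K : ℕ} (h : HasStrongEdgeColoring G K) :
    ssChromIdx G ≤ strongChromIdx G :=
  csInf_le_csInf' ⟨K, h⟩ fun _ hK => HasStrongEdgeColoring.hasSemistrongEdgeColoring hK

theorem isStrongMatching_empty : IsStrongMatching G ∅ :=
  ⟨⟨Set.empty_subset _, by simp⟩, by simp [edgeVerts]⟩

theorem hasStrongEdgeColoring_card_of_fibers {β : Type*} (c : Sym2 V → β) (S : Finset β)
    (hcS : ∀ e ∈ G.edgeSet, c e ∈ S)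
    (hc : ∀ b, IsStrongMatching G {e | e ∈ G.edgeSet ∧ c e = b}) :
    HasStrongEdgeColoring G #S := by
  classical
  let idx : Sym2 V → ℕ := fun e => if h : c e ∈ S then S.equivFin ⟨c e, h⟩ else #S
  have hidx : ∀ e (he : e ∈ G.edgeSet), idx e = S.equivFin ⟨c e, hcS e he⟩ :=
    fun e he => dif_pos (hcS e he)
  refine ⟨idx, fun e he => by simp [hidx e he], fun i => ?_⟩
  by_cases hi : i < #S
  · convert hc (S.equivFin.symm ⟨i, hi⟩) using 1
    ext e
    refine and_congr_right fun he => ?_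
    rw [hidx e he, ← Subtype.mk_eq_mk (h := hcS e he) (h' := Subtype.prop _), Subtype.coe_eta,
      Equiv.eq_symm_apply, Fin.ext_iff]
  · convert (isStrongMatching_empty : IsStrongMatching G ∅)
    exact Set.eq_empty_of_forall_notMem fun e ⟨he, hei⟩ => hi (hei ▸ hidx e he ▸ Fin.is_lt _)

theorem IsSemistrongMatching.exists_orientation (h : IsSemistrongMatching G M) :
    ∃ A B : M → V, (∀ e, G.Adj (A e) (B e)) ∧ (∀ e f, G.Adj (A e) (B f) → e = f) ∧
      ∀ e f, ¬ G.Adj (A e) (A f) := by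
  obtain ⟨⟨hMG, hdisj⟩, hpend⟩ := h
  choose A B hAB hpend using fun e : M => hpend e e.2
  have hA : ∀ e : M, A e ∈ (e : Sym2 V) := fun e => hAB e ▸ Sym2.mem_mk_left _ _
  have hB : ∀ e : M, B e ∈ (e : Sym2 V) := fun e => hAB e ▸ Sym2.mem_mk_right _ _
  have hsame : ∀ e f : M, ∀ v, v ∈ (e : Sym2 V) → v ∈ (f : Sym2 V) → e = f := fun e f v he hf =>
    Subtype.ext (by_contra fun hne => hdisj e e.2 f f.2 hne v he hf)
  refine ⟨A, B, fun e => ?_, fun e f hef => ?_, fun e f hef => ?_⟩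
  · exact (hAB e ▸ hMG e.2 : s(A e, B e) ∈ G.edgeSet)
  · exact hsame e f _ (hpend e _ ⟨f, f.2, hB f⟩ hef ▸ hB e) (hB f)
  · obtain rfl | hne := eq_or_ne e f
    · exact G.irrefl hef
    · exact hne (hsame e f _ (hpend e _ ⟨f, f.2, hA f⟩ hef ▸ hB e) (hA f))

theorem HasSemistrongEdgeColoring.mul_card_edgeFinset_le [Fintype G.edgeSet] {K m r : ℕ}
    (hG : HasSemistrongEdgeColoring G K)
    (hN : ∀ N : Finset (Sym2 V), IsSemistrongMatching G N → r * #N ≤ m) :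
    r * #G.edgeFinset ≤ K * m := by
  classical
  obtain ⟨c, hcK, hc⟩ := hG
  have hclass : ∀ i, IsSemistrongMatching G ↑(G.edgeFinset.filter (c · = i)) := fun i => by
    convert hc i
    ext e
    simp
  calc r * #G.edgeFinset = ∑ i ∈ range K, r * #(G.edgeFinset.filter (c · = i)) := by
        rw [card_eq_sum_card_fiberwise fun e he => mem_range.2 (hcK e (mem_edgeFinset.1 he)),
          mul_sum]
    _ ≤ ∑ _i ∈ range K, m := sum_le_sum fun i _ => hN _ (hclass i)
    _ = K * m := by simp

end EdgeColoring

section Kneser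

variable {n k : ℕ}

instance : DecidableRel (kneserGraph n k).Adj :=
  inferInstanceAs (DecidableRel (SimpleGraph.fromRel _).Adj)

theorem disjoint_of_kneserGraph_adj {s t : {s : Finset (Fin n) // #s = k}}
    (h : (kneserGraph n k).Adj s t) : Disjoint s.1 t.1 :=
  ((fromRel_adj _ s t).1 h).2.elim id fun h => h.symm

theorem kneserGraph_adj (hk : 0 < k) {s t : {s : Finset (Fin n) // #s = k}} :
    (kneserGraph n k).Adj s t ↔ Disjoint s.1 t.1 := by
  refine ⟨disjoint_of_kneserGraph_adj, fun h => (fromRel_adj _ s t).2 ⟨?_, .inl h⟩⟩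
  rintro rfl
  exact hk.ne' (s.2.symm.trans (card_eq_zero.2 (disjoint_self.1 h)))

theorem kneserGraph_degree (hk : 0 < k) (s : {s : Finset (Fin n) // #s = k}) :
    (kneserGraph n k).degree s = (n - k).choose k := by
  have hnbr : ((kneserGraph n k).neighborFinset s).map (.subtype _) = powersetCard k s.1ᶜ := by
    ext t
    simp [mem_powersetCard, kneserGraph_adj hk, subset_compl_iff_disjoint_left, disjoint_comm]
  rw [← card_neighborFinset_eq_degree, ← card_map, hnbr, card_powersetCard, card_compl,
    Fintype.card_fin, s.2]

theorem two_mul_card_edgeFinset_kneserGraph (hk : 0 < k) :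
    2 * #(kneserGraph n k).edgeFinset = n.choose k * (n - k).choose k := by
  rw [← sum_degrees_eq_twice_card_edges]
  simp [kneserGraph_degree hk, Fintype.card_finset_len]

def kneserEdgeUnion : Sym2 {s : Finset (Fin n) // #s = k} → Finset (Fin n) :=
  Sym2.lift ⟨fun s t => s.1 ∪ t.1, fun _ _ => union_comm _ _⟩

@[simp]
theorem kneserEdgeUnion_mk (s t : {s : Finset (Fin n) // #s = k}) :
    kneserEdgeUnion s(s, t) = s.1 ∪ t.1 := rfl

theorem card_kneserEdgeUnion {e : Sym2 {s : Finset (Fin n) // #s = k}}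
    (he : e ∈ (kneserGraph n k).edgeSet) : #(kneserEdgeUnion e) = 2 * k := by
  induction e with
  | _ s t => rw [kneserEdgeUnion_mk, card_union_of_disjoint (disjoint_of_kneserGraph_adj he), s.2,
      t.2, two_mul]

theorem subset_kneserEdgeUnion {e : Sym2 {s : Finset (Fin n) // #s = k}}
    {v : {s : Finset (Fin n) // #s = k}} (hv : v ∈ e) : v.1 ⊆ kneserEdgeUnion e := by
  obtain ⟨w, rfl⟩ := Sym2.mem_iff_exists.1 hv
  exact subset_union_left

theorem isStrongMatching_kneserEdgeUnion_fiber (U : Finset (Fin n)) :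
    IsStrongMatching (kneserGraph n k)
      {e | e ∈ (kneserGraph n k).edgeSet ∧ kneserEdgeUnion e = U} := by
  refine ⟨⟨fun e he => he.1, ?_⟩, ?_⟩
  · rintro e ⟨he, rfl⟩ f ⟨hf, hU⟩ hne v hve hvf
    obtain ⟨w, rfl⟩ := Sym2.mem_iff_exists.1 hve
    obtain ⟨w', rfl⟩ := Sym2.mem_iff_exists.1 hvf
    refine hne (congrArg _ (Subtype.ext ?_))
    rw [← union_sdiff_cancel_left (disjoint_of_kneserGraph_adj he),
      ← union_sdiff_cancel_left (disjoint_of_kneserGraph_adj hf)]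
    simpa using congrArg (· \ v.1) hU.symm
  · rintro u ⟨e, ⟨he, rfl⟩, hue⟩ w ⟨f, ⟨hf, hU⟩, hwf⟩ huw
    refine ⟨huw, eq_of_subset_of_card_le (union_subset (subset_kneserEdgeUnion hue)
      (hU ▸ subset_kneserEdgeUnion hwf)) ?_⟩
    rw [card_kneserEdgeUnion he, ← card_kneserEdgeUnion (e := s(u, w)) huw]

theorem hasStrongEdgeColoring_kneserGraph :
    HasStrongEdgeColoring (kneserGraph n k) (n.choose (2 * k)) := by
  simpa using hasStrongEdgeColoring_card_of_fibers kneserEdgeUnion (powersetCard (2 * k) univ)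
    (fun e he => mem_powersetCard.2 ⟨subset_univ _, card_kneserEdgeUnion he⟩)
    isStrongMatching_kneserEdgeUnion_fiber

theorem two_mul_card_le_of_isSemistrongMatching_kneserGraph (hk : 0 < k)
    {M : Finset (Sym2 {s : Finset (Fin n) // #s = k})}
    (hM : IsSemistrongMatching (kneserGraph n k) M) : 2 * #M ≤ (2 * k).choose k := by
  obtain ⟨A, B, hAB, hAB', hAA⟩ := hM.exists_orientation
  let σ := M.equivFin.symm
  let X : Fin #M ⊕ₗ Fin #M → Finset (Fin n) :=
    fun i => Sum.elim (fun i => (A (σ i)).1) (fun i => (B (σ i)).1) (ofLex i)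
  let Y : Fin #M ⊕ₗ Fin #M → Finset (Fin n) :=
    fun i => Sum.elim (fun i => (B (σ i)).1) (fun i => (A (σ i)).1) (ofLex i)
  have hcross : ∀ i j, i < j → ¬ Disjoint (X i) (Y j) := by
    intro i j hij hd
    obtain ⟨i | i, rfl⟩ := toLex.surjective i <;> obtain ⟨j | j, rfl⟩ := toLex.surjective j
    · exact (Sum.Lex.inl_lt_inl_iff.1 hij).ne (σ.injective (hAB' _ _ ((kneserGraph_adj hk).2 hd)))
    · exact hAA _ _ ((kneserGraph_adj hk).2 hd)
    · exact Sum.Lex.not_inr_lt_inl hij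
    · exact (Sum.Lex.inr_lt_inr_iff.1 hij).ne
        (σ.injective (hAB' _ _ ((kneserGraph_adj hk).2 hd.symm))).symm
  have hcard := card_le_choose_of_skew_cross_intersecting (a := k) (b := k) X Y
    (fun i => by obtain ⟨i | i, rfl⟩ := toLex.surjective i; exacts [(A _).2.le, (B _).2.le])
    (fun i => by obtain ⟨i | i, rfl⟩ := toLex.surjective i; exacts [(B _).2, (A _).2])
    (fun i => by
      obtain ⟨i | i, rfl⟩ := toLex.surjective i
      · exact disjoint_of_kneserGraph_adj (hAB _)
      · exact (disjoint_of_kneserGraph_adj (hAB _)).symm)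
    hcross
  simpa only [Fintype.card_lex, Fintype.card_sum, Fintype.card_fin, two_mul] using hcard

theorem choose_le_of_hasSemistrongEdgeColoring_kneserGraph (hk : 0 < k) {K : ℕ}
    (h : HasSemistrongEdgeColoring (kneserGraph n k) K) : n.choose (2 * k) ≤ K := by
  have hE := h.mul_card_edgeFinset_le fun M => two_mul_card_le_of_isSemistrongMatching_kneserGraph hk
  have hchoose : n.choose k * (n - k).choose k = n.choose (2 * k) * (2 * k).choose k := by
    simpa [two_mul] using (Nat.choose_mul (n := n) (Nat.le_add_left k k)).symm
  rw [two_mul_card_edgeFinset_kneserGraph hk, hchoose] at hE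
  exact Nat.le_of_mul_le_mul_right hE (Nat.choose_pos (by omega))

end Kneser

theorem chromIdx_kneserGraph_general (n k : ℕ) (hk : 1 ≤ k) :
    strongChromIdx (kneserGraph n k) = n.choose (2 * k) ∧
    ssChromIdx (kneserGraph n k) = n.choose (2 * k) := by
  have hcol : HasStrongEdgeColoring (kneserGraph n k) (n.choose (2 * k)) :=
    hasStrongEdgeColoring_kneserGraph
  have hstrong : strongChromIdx (kneserGraph n k) ≤ n.choose (2 * k) := Nat.sInf_le hcol
  have hss : n.choose (2 * k) ≤ ssChromIdx (kneserGraph n k) :=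
    le_csInf ⟨_, hcol.hasSemistrongEdgeColoring⟩ fun _ =>
      choose_le_of_hasSemistrongEdgeColoring_kneserGraph hk
  have := ssChromIdx_le_strongChromIdx hcol
  omega

/-- For all positive integers `n` and `k` with `2k ≤ n`, the strong chromatic
index and the semistrong chromatic index of the Kneser graph `K(n,k)` are both
equal to `C(n, 2k)`. -/
theorem chromIdx_kneserGraph (n k : ℕ) (hk : 1 ≤ k) (hkn : 2 * k ≤ n) :
    strongChromIdx (kneserGraph n k) = n.choose (2 * k) ∧
    ssChromIdx (kneserGraph n k) = n.choose (2 * k) :=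
  chromIdx_kneserGraph_general n k hk
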